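/- Let R be a commutative ring containing the rationals, and let (f_n)_{n≥0}, (g_n)_{n≥0}, (h_n)_{n≥0} be sequences in R[[x]] satisfying ∑_{k=0}^n f_k(x) g_{n-k}(y) = h_n(x+y) in R[[x,y]] for all n ≥ 0. Assume that the constant terms f_0(0) and g_0(0) are invertible elements of R. Then there exist unique formal power series A, B, Ψ ∈ R[[t]] such that f_n(x) = [t^n] A(t) e^{xΨ(t)}, g_n(x) = [t^n] B(t) e^{xΨ(t)}, and h_n(x) = [t^n] A(t) B(t) e^{xΨ(t)} for all n ≥ 0; moreover A and B are invertible in R[[t]]. -/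

import Mathlib

noncomputable section

open PowerSeries

/-- The embedding of `R[[t]]` into the two-variable power series ring `R[[x,t]]`
(where `x` is variable `0` and `t` is variable `1`), sending `t ↦ t`. -/
def tEmb {R : Type*} [CommRing R] (Ψ : PowerSeries R) : MvPowerSeries (Fin 2) R :=
  fun e => if e 0 = 0 then PowerSeries.coeff (e 1) Ψ else 0

/-- Substitution of a multivariate power series `a` (intended to have zero constant
term) for the variable of a univariate power series `f`:  `f(a) = ∑ₙ fₙ aⁿ`.
When the constant term of `a` is zero, the coefficient of a monomial `e` in `aⁿ`
vanishes whenever `n` exceeds the total degree of `e`, so the finite sum below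
computes the genuine substitution `∑ₙ fₙ aⁿ`. -/
def psubst {R : Type*} [CommRing R] {σ : Type*} (a : MvPowerSeries σ R)
    (f : PowerSeries R) : MvPowerSeries σ R :=
  fun e => ∑ n ∈ Finset.range ((e.sum fun _ m => m) + 1),
    PowerSeries.coeff n f * MvPowerSeries.coeff e (a ^ n)

/-- The formal power series `e^{xΨ(t)} ∈ R[[x,t]]`, where `x` is variable `0`
and `t` is variable `1`.  It is well defined since `x·Ψ(t)` has zero constant term. -/
def expXPsi {R : Type*} [CommRing R] [Algebra ℚ R] (Ψ : PowerSeries R) :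
    MvPowerSeries (Fin 2) R :=
  psubst (MvPowerSeries.X 0 * tEmb Ψ) (PowerSeries.exp R)

/-- `f_n(x) = [tⁿ] e^{xΨ(t)} ∈ R[[x]]`: the coefficient of `tⁿ` in `e^{xΨ(t)}`,
as a power series in `x`. -/
def convFam {R : Type*} [CommRing R] [Algebra ℚ R] (Ψ : PowerSeries R) (n : ℕ) :
    PowerSeries R :=
  PowerSeries.mk fun m =>
    MvPowerSeries.coeff (Finsupp.single 0 m + Finsupp.single 1 n) (expXPsi Ψ)

/-- `[tⁿ] A(t) e^{xΨ(t)} ∈ R[[x]]`: the coefficient of `tⁿ` in `A(t)e^{xΨ(t)}`,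
as a power series in `x`. -/
def shefferFam {R : Type*} [CommRing R] [Algebra ℚ R] (A Ψ : PowerSeries R) (n : ℕ) :
    PowerSeries R :=
  PowerSeries.mk fun m =>
    MvPowerSeries.coeff (Finsupp.single 0 m + Finsupp.single 1 n) (tEmb A * expXPsi Ψ)

/-!
Reading off the coefficient of `x^m y^p` turns the functional equation into
`F_m G_p = (m+p choose m) H_{m+p}` for the generating series `F_m = ∑ₙ [x^m] fₙ tⁿ` and
likewise `G_p`, `H_p`. Cancelling the unit `G_0` gives `F_m F_1 = (m+1) F_0 F_{m+1}`, so with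
`Ψ = F_1 / F_0` induction yields `m! F_m = F_0 Ψ^m`, and then `m! G_m = G_0 Ψ^m` and
`m! H_m = F_0 G_0 Ψ^m`. As `[x^m tⁿ] A(t) e^{xΨ(t)} = [tⁿ] A Ψ^m / m!`, this is the claimed
form with `A = F_0` and `B = G_0`; uniqueness holds because `A` and `A Ψ` are forced to be
`F_0` and `F_1`.
-/

open Finset
open scoped Nat

section Substitution

variable {R σ : Type*} [CommRing R]

lemma coeff_psubst (a : MvPowerSeries σ R) (f : PowerSeries R) (e : σ →₀ ℕ) :
    MvPowerSeries.coeff e (psubst a f) =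
      ∑ n ∈ range (e.degree + 1), coeff n f * MvPowerSeries.coeff e (a ^ n) :=
  rfl

lemma coeff_psubst_eq_of_coeff_pow_eq_zero {a : MvPowerSeries σ R} (f : PowerSeries R)
    {e : σ →₀ ℕ} {k : ℕ} (hk : k ≤ e.degree)
    (ha : ∀ n ≠ k, MvPowerSeries.coeff e (a ^ n) = 0) :
    MvPowerSeries.coeff e (psubst a f) = coeff k f * MvPowerSeries.coeff e (a ^ k) := by
  rw [coeff_psubst, sum_eq_single k (fun n _ hn => by rw [ha n hn, mul_zero])
    (fun hk' => absurd (mem_range.2 (Nat.lt_succ_of_le hk)) hk')]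

lemma coeff_psubst_X [DecidableEq σ] (i : σ) (f : PowerSeries R) (e : σ →₀ ℕ) :
    MvPowerSeries.coeff e (psubst (MvPowerSeries.X i) f) =
      if e = Finsupp.single i (e i) then coeff (e i) f else 0 := by
  rw [coeff_psubst_eq_of_coeff_pow_eq_zero f (Finsupp.le_degree i e), MvPowerSeries.coeff_X_pow]
  · split_ifs <;> simp
  · intro n hn
    rw [MvPowerSeries.coeff_X_pow, if_neg]
    rintro rfl
    simp at hn

lemma coeff_psubst_X_mul_psubst_X {i j : σ} (hij : i ≠ j) (f g : PowerSeries R) (m p : ℕ) :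
    MvPowerSeries.coeff (Finsupp.single i m + Finsupp.single j p)
        (psubst (MvPowerSeries.X i) f * psubst (MvPowerSeries.X j) g) =
      coeff m f * coeff p g := by
  classical
  rw [MvPowerSeries.coeff_mul, sum_eq_single (Finsupp.single i m, Finsupp.single j p)]
  · simp [coeff_psubst_X]
  · rintro ⟨d, d'⟩ hd hne
    rw [HasAntidiagonal.mem_antidiagonal] at hd
    dsimp only at hd ⊢
    rw [coeff_psubst_X, coeff_psubst_X]
    split_ifs with h h' <;> try simp only [zero_mul, mul_zero]
    refine absurd ?_ hne
    rw [h, h'] at hd ⊢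
    have hi := congrArg (· i) hd
    have hj := congrArg (· j) hd
    simp only [Finsupp.add_apply, Finsupp.single_eq_same, Finsupp.single_eq_of_ne hij,
      Finsupp.single_eq_of_ne hij.symm, add_zero, zero_add] at hi hj
    rw [hi, hj]
  · simp [HasAntidiagonal.mem_antidiagonal]

end Substitution

section Bivariate

variable {R : Type*} [CommRing R]

def bidegree (m n : ℕ) : Fin 2 →₀ ℕ := Finsupp.single 0 m + Finsupp.single 1 n

@[simp] lemma bidegree_apply_zero (m n : ℕ) : bidegree m n 0 = m := by
  simp [bidegree]

@[simp] lemma bidegree_apply_one (m n : ℕ) : bidegree m n 1 = n := by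
  simp [bidegree]

lemma bidegree_eta (e : Fin 2 →₀ ℕ) : bidegree (e 0) (e 1) = e := by
  ext i; fin_cases i <;> simp

@[simp] lemma bidegree_inj {m n m' n' : ℕ} :
    bidegree m n = bidegree m' n' ↔ m = m' ∧ n = n' := by
  refine ⟨fun h => ⟨?_, ?_⟩, fun h => by rw [h.1, h.2]⟩
  · simpa using congrArg (· 0) h
  · simpa using congrArg (· 1) h

@[simp] lemma degree_bidegree (m n : ℕ) : (bidegree m n).degree = m + n := by
  simp [bidegree]

@[simp] lemma bidegree_zero_zero : bidegree 0 0 = 0 := by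
  simp [bidegree]

lemma bidegree_add (a b c d : ℕ) : bidegree a c + bidegree b d = bidegree (a + b) (c + d) := by
  ext i; fin_cases i <;> simp

lemma coeff_mul_bidegree (F G : MvPowerSeries (Fin 2) R) (m n : ℕ) :
    MvPowerSeries.coeff (bidegree m n) (F * G) =
      ∑ a ∈ antidiagonal m, ∑ c ∈ antidiagonal n,
        MvPowerSeries.coeff (bidegree a.1 c.1) F * MvPowerSeries.coeff (bidegree a.2 c.2) G := by
  rw [MvPowerSeries.coeff_mul, ← sum_product']
  refine sum_nbij' (fun q => ((q.1 0, q.2 0), (q.1 1, q.2 1)))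
    (fun q => (bidegree q.1.1 q.2.1, bidegree q.1.2 q.2.2)) ?_ ?_ ?_ ?_ ?_
  · intro q hq
    simp only [mem_product, HasAntidiagonal.mem_antidiagonal] at hq ⊢
    simp [← Finsupp.add_apply, hq]
  · intro q hq
    simp only [mem_product, HasAntidiagonal.mem_antidiagonal] at hq ⊢
    rw [bidegree_add, hq.1, hq.2]
  · intro q _
    simp [bidegree_eta]
  · intro q _
    simp
  · intro q _
    simp [bidegree_eta]

lemma coeff_pow_X_zero_add_X_one (j m p : ℕ) :
    MvPowerSeries.coeff (bidegree m p)
        ((MvPowerSeries.X 0 + MvPowerSeries.X 1 : MvPowerSeries (Fin 2) R) ^ j) =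
      if m + p = j then (j.choose m : R) else 0 := by
  classical
  rw [(Commute.all _ _).add_pow, map_sum]
  simp only [MvPowerSeries.X_pow_eq, MvPowerSeries.monomial_mul_monomial, ← map_natCast
    (MvPowerSeries.C (σ := Fin 2) (R := R)), MvPowerSeries.coeff_mul_C,
    MvPowerSeries.coeff_monomial, ← bidegree.eq_1, bidegree_inj, mul_one]
  rw [sum_eq_single m (fun k _ hk => by rw [if_neg (fun h => hk h.1.symm), zero_mul])]
  · split_ifs with hm hj hj
    · rw [one_mul]
    · rw [one_mul, Nat.choose_eq_zero_of_lt (by omega), Nat.cast_zero]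
    · exact absurd ⟨rfl, by omega⟩ hm
    · rw [zero_mul]
  · intro hm
    rw [mem_range, not_lt] at hm
    rw [Nat.choose_eq_zero_of_lt (by omega), Nat.cast_zero, mul_zero]

lemma coeff_psubst_X_zero_add_X_one (f : PowerSeries R) (m p : ℕ) :
    MvPowerSeries.coeff (bidegree m p) (psubst (MvPowerSeries.X 0 + MvPowerSeries.X 1) f) =
      ((m + p).choose m : R) * coeff (m + p) f := by
  rw [coeff_psubst_eq_of_coeff_pow_eq_zero f (degree_bidegree m p).ge, coeff_pow_X_zero_add_X_one,
    if_pos rfl, mul_comm]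
  intro j hj
  rw [coeff_pow_X_zero_add_X_one, if_neg (Ne.symm hj)]

end Bivariate

section XCoeff

variable {R : Type*} [CommRing R]

def xCoeff (m : ℕ) (F : MvPowerSeries (Fin 2) R) : PowerSeries R :=
  PowerSeries.mk fun n => MvPowerSeries.coeff (bidegree m n) F

@[simp] lemma coeff_xCoeff (m n : ℕ) (F : MvPowerSeries (Fin 2) R) :
    coeff n (xCoeff m F) = MvPowerSeries.coeff (bidegree m n) F :=
  coeff_mk _ _

lemma coeff_bidegree_tEmb (A : PowerSeries R) (m n : ℕ) :
    MvPowerSeries.coeff (bidegree m n) (tEmb A) = if m = 0 then coeff n A else 0 := by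
  change (if bidegree m n 0 = 0 then _ else 0) = _
  simp

lemma xCoeff_tEmb_mul (A : PowerSeries R) (F : MvPowerSeries (Fin 2) R) (m : ℕ) :
    xCoeff m (tEmb A * F) = A * xCoeff m F := by
  ext n
  rw [coeff_xCoeff, coeff_mul_bidegree, coeff_mul, sum_eq_single (0, m)]
  · simp [coeff_bidegree_tEmb]
  · rintro ⟨a, b⟩ hab hne
    have ha : a ≠ 0 := by
      rintro rfl
      rw [HasAntidiagonal.mem_antidiagonal, zero_add] at hab
      exact hne (by rw [← hab])
    simp [coeff_bidegree_tEmb, ha]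
  · simp

lemma xCoeff_succ_X_zero_mul (F : MvPowerSeries (Fin 2) R) (m : ℕ) :
    xCoeff (m + 1) (MvPowerSeries.X 0 * F) = xCoeff m F := by
  ext n
  have hsub : bidegree (m + 1) n - Finsupp.single 0 1 = bidegree m n := by
    ext i; fin_cases i <;> simp
  rw [coeff_xCoeff, coeff_xCoeff, MvPowerSeries.X_def, MvPowerSeries.coeff_monomial_mul,
    if_pos (Finsupp.single_le_iff.2 (by simp)), hsub, one_mul]

lemma xCoeff_zero_X_zero_mul (F : MvPowerSeries (Fin 2) R) :
    xCoeff 0 (MvPowerSeries.X 0 * F) = 0 := by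
  ext n
  rw [coeff_xCoeff, MvPowerSeries.X_def, MvPowerSeries.coeff_monomial_mul, if_neg (by simp),
    map_zero]

lemma xCoeff_one (m : ℕ) : xCoeff m (1 : MvPowerSeries (Fin 2) R) = if m = 0 then 1 else 0 := by
  classical
  ext n
  rw [coeff_xCoeff, MvPowerSeries.coeff_one, ← bidegree_zero_zero]
  simp only [bidegree_inj]
  split_ifs <;> simp_all [coeff_one]

lemma xCoeff_X_zero_mul_tEmb_pow (Ψ : PowerSeries R) (j m : ℕ) :
    xCoeff m ((MvPowerSeries.X 0 * tEmb Ψ) ^ j) = if m = j then Ψ ^ j else 0 := by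
  induction j generalizing m with
  | zero => simp [xCoeff_one]
  | succ j ih =>
    rw [pow_succ', mul_assoc]
    rcases m with _ | m
    · simp [xCoeff_zero_X_zero_mul]
    · rw [xCoeff_succ_X_zero_mul, xCoeff_tEmb_mul, ih, pow_succ']
      split_ifs <;> simp_all

lemma xCoeff_psubst_X_zero_mul_tEmb (f Ψ : PowerSeries R) (m : ℕ) :
    xCoeff m (psubst (MvPowerSeries.X 0 * tEmb Ψ) f) = C (coeff m f) * Ψ ^ m := by
  ext n
  rw [coeff_xCoeff, coeff_psubst_eq_of_coeff_pow_eq_zero f (k := m) (by simp), ← coeff_xCoeff,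
    xCoeff_X_zero_mul_tEmb_pow, if_pos rfl, coeff_C_mul]
  intro j hj
  rw [← coeff_xCoeff, xCoeff_X_zero_mul_tEmb_pow, if_neg (Ne.symm hj), map_zero]

end XCoeff

section CoeffSeries

variable {R : Type*} [CommRing R]

def coeffSeries (u : ℕ → PowerSeries R) (m : ℕ) : PowerSeries R :=
  PowerSeries.mk fun n => coeff m (u n)

@[simp] lemma coeff_coeffSeries (u : ℕ → PowerSeries R) (m n : ℕ) :
    coeff n (coeffSeries u m) = coeff m (u n) :=
  coeff_mk _ _

lemma isUnit_coeffSeries_zero {u : ℕ → PowerSeries R} (hu : IsUnit (constantCoeff (u 0))) :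
    IsUnit (coeffSeries u 0) := by
  rwa [isUnit_iff_constantCoeff, ← coeff_zero_eq_constantCoeff_apply, coeff_coeffSeries,
    coeff_zero_eq_constantCoeff_apply]

lemma coeffSeries_mul_coeffSeries {f g h : ℕ → PowerSeries R}
    (hconv : ∀ n, ∑ k ∈ range (n + 1),
        psubst (MvPowerSeries.X 0) (f k) * psubst (MvPowerSeries.X 1) (g (n - k)) =
      psubst (MvPowerSeries.X (0 : Fin 2) + MvPowerSeries.X 1) (h n)) (m p : ℕ) :
    coeffSeries f m * coeffSeries g p =
      ((m + p).choose m : PowerSeries R) * coeffSeries h (m + p) := by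
  ext n
  have hcoeff := congrArg (MvPowerSeries.coeff (bidegree m p)) (hconv n)
  rw [map_sum, coeff_psubst_X_zero_add_X_one] at hcoeff
  simp only [bidegree, coeff_psubst_X_mul_psubst_X (by decide : (0 : Fin 2) ≠ 1)] at hcoeff
  rw [coeff_mul, Nat.sum_antidiagonal_eq_sum_range_succ_mk, ← map_natCast C,
    coeff_C_mul]
  simpa using hcoeff

end CoeffSeries

section Sheffer

variable {R : Type*} [CommRing R] [Algebra ℚ R]

lemma factorial_mul_coeff_exp (m : ℕ) : (m ! : R) * coeff m (exp R) = 1 := by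
  rw [coeff_exp, ← map_natCast (algebraMap ℚ R), ← map_mul,
    mul_one_div_cancel (by positivity), map_one]

lemma coeff_shefferFam (A Ψ : PowerSeries R) (n m : ℕ) :
    coeff m (shefferFam A Ψ n) = coeff n (C (coeff m (exp R)) * (A * Ψ ^ m)) := by
  rw [shefferFam, coeff_mk, ← bidegree.eq_1, ← coeff_xCoeff, xCoeff_tEmb_mul, expXPsi,
    xCoeff_psubst_X_zero_mul_tEmb, mul_left_comm]

lemma forall_eq_shefferFam_iff (u : ℕ → PowerSeries R) (A Ψ : PowerSeries R) :
    (∀ n, u n = shefferFam A Ψ n) ↔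
      ∀ m, (m ! : PowerSeries R) * coeffSeries u m = A * Ψ ^ m := by
  have hunit (m : ℕ) : (m ! : PowerSeries R) * C (coeff m (exp R)) = 1 := by
    rw [← map_natCast C, ← map_mul, factorial_mul_coeff_exp, map_one]
  calc (∀ n, u n = shefferFam A Ψ n)
      ↔ ∀ m, coeffSeries u m = C (coeff m (exp R)) * (A * Ψ ^ m) := by
        simp only [PowerSeries.ext_iff, coeff_coeffSeries, coeff_shefferFam]
        exact forall_comm
    _ ↔ _ := forall_congr' fun m => ⟨fun h => by rw [h, ← mul_assoc, hunit, one_mul],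
        fun h => by rw [← h, ← mul_assoc, mul_comm (C _), hunit, one_mul]⟩

end Sheffer

section BinomialConvolution

variable {S : Type*} [CommRing S] {F G H : ℕ → S}

lemma succ_mul_eq_of_binomial_conv (hG : IsRightRegular (G 0))
    (hconv : ∀ m p, F m * G p = (m + p).choose m * H (m + p)) (m : ℕ) :
    F m * F 1 = (m + 1) * (F 0 * F (m + 1)) := by
  have hleft (m : ℕ) : F m * G 0 = H m := by simpa using hconv m 0
  have hright (p : ℕ) : F 0 * G p = H p := by simpa using hconv 0 p
  apply hG
  dsimp only
  calc F m * F 1 * G 0 = F 0 * (F m * G 1) := by rw [mul_assoc, hleft, ← hright]; ring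
    _ = F 0 * ((m + 1) * H (m + 1)) := by rw [hconv]; simp
    _ = (m + 1) * (F 0 * F (m + 1)) * G 0 := by rw [← hleft]; ring

lemma factorial_mul_eq_mul_pow (hF : IsLeftRegular (F 0)) {Ψ : S} (hΨ : F 0 * Ψ = F 1)
    (hsucc : ∀ m, F m * F 1 = (m + 1) * (F 0 * F (m + 1))) (m : ℕ) :
    m ! * F m = F 0 * Ψ ^ m := by
  induction m with
  | zero => simp
  | succ m ih =>
    apply hF
    calc F 0 * ((m + 1)! * F (m + 1)) = m ! * ((m + 1) * (F 0 * F (m + 1))) := by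
          push_cast [Nat.factorial_succ]; ring
      _ = (m ! * F m) * F 1 := by rw [← hsucc]; ring
      _ = F 0 * (F 0 * Ψ ^ (m + 1)) := by rw [ih, ← hΨ]; ring

lemma exists_factorial_mul_eq_mul_pow_of_binomial_conv (hF : IsUnit (F 0)) (hG : IsUnit (G 0))
    (hconv : ∀ m p, F m * G p = (m + p).choose m * H (m + p)) :
    ∃ Ψ, ∀ m, m ! * F m = F 0 * Ψ ^ m ∧ m ! * G m = G 0 * Ψ ^ m ∧
      m ! * H m = F 0 * G 0 * Ψ ^ m := by
  obtain ⟨Ψ, hΨ⟩ : ∃ Ψ, F 0 * Ψ = F 1 := ⟨_, hF.unit.mul_inv_cancel_left (F 1)⟩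
  have hFm := factorial_mul_eq_mul_pow hF.isRegular.left hΨ
    (succ_mul_eq_of_binomial_conv hG.isRegular.right hconv)
  have hleft (m : ℕ) : F m * G 0 = H m := by simpa using hconv m 0
  have hright (p : ℕ) : F 0 * G p = H p := by simpa using hconv 0 p
  refine ⟨Ψ, fun m => ⟨hFm m, hF.isRegular.left ?_, ?_⟩⟩
  · calc F 0 * (m ! * G m) = m ! * F m * G 0 := by rw [mul_assoc, hleft, ← hright]; ring
      _ = F 0 * (G 0 * Ψ ^ m) := by rw [hFm]; ring
  · rw [← hleft, ← mul_assoc, hFm]; ring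

lemma eq_of_factorial_mul_eq_mul_pow (hF : IsLeftRegular (F 0)) {A Ψ A' Ψ' : S}
    (h : ∀ m, m ! * F m = A * Ψ ^ m) (h' : ∀ m, m ! * F m = A' * Ψ' ^ m) :
    A' = A ∧ Ψ' = Ψ := by
  have hA : A = F 0 := by simpa using (h 0).symm
  have hA' : A' = F 0 := by simpa using (h' 0).symm
  refine ⟨hA'.trans hA.symm, hF ?_⟩
  have h1 := h 1
  have h1' := h' 1
  simp only [Nat.factorial_one, Nat.cast_one, one_mul, pow_one] at h1 h1'
  calc F 0 * Ψ' = F 1 := by rw [h1', hA']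
    _ = F 0 * Ψ := by rw [h1, hA]

end BinomialConvolution

/-- Let `R` be a commutative ring containing the rationals, and
let `(f_n), (g_n), (h_n)` be sequences in `R[[x]]` satisfying
`∑_{k=0}^n f_k(x) g_{n-k}(y) = h_n(x+y)` in `R[[x,y]]` for all `n` (here `x` is
variable `0` and `y` is variable `1`).  Assume the constant terms `f₀(0)` and
`g₀(0)` are invertible in `R`.  Then there exist unique `A, B, Ψ ∈ R[[t]]` such
that `f_n(x) = [tⁿ] A(t)e^{xΨ(t)}`, `g_n(x) = [tⁿ] B(t)e^{xΨ(t)}` and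
`h_n(x) = [tⁿ] A(t)B(t)e^{xΨ(t)}` for all `n`; moreover `A` and `B` are
invertible in `R[[t]]`. -/
theorem sheffer_classification {R : Type*} [CommRing R] [Algebra ℚ R]
    (f g h : ℕ → PowerSeries R)
    (hconv : ∀ n, ∑ k ∈ Finset.range (n + 1),
        psubst (MvPowerSeries.X 0) (f k) * psubst (MvPowerSeries.X 1) (g (n - k)) =
      psubst (MvPowerSeries.X (0 : Fin 2) + MvPowerSeries.X 1) (h n))
    (hf0 : IsUnit (PowerSeries.constantCoeff (f 0)))
    (hg0 : IsUnit (PowerSeries.constantCoeff (g 0))) :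
    ∃ A B Ψ : PowerSeries R,
      (∀ n, f n = shefferFam A Ψ n) ∧
      (∀ n, g n = shefferFam B Ψ n) ∧
      (∀ n, h n = shefferFam (A * B) Ψ n) ∧
      IsUnit A ∧ IsUnit B ∧
      ∀ A' B' Ψ' : PowerSeries R,
        ((∀ n, f n = shefferFam A' Ψ' n) ∧
         (∀ n, g n = shefferFam B' Ψ' n) ∧
         (∀ n, h n = shefferFam (A' * B') Ψ' n)) →
        A' = A ∧ B' = B ∧ Ψ' = Ψ := by
  have hF := isUnit_coeffSeries_zero hf0
  have hG := isUnit_coeffSeries_zero hg0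
  obtain ⟨Ψ, hΨ⟩ :=
    exists_factorial_mul_eq_mul_pow_of_binomial_conv hF hG (coeffSeries_mul_coeffSeries hconv)
  simp only [forall_eq_shefferFam_iff]
  refine ⟨_, _, Ψ, fun m => (hΨ m).1, fun m => (hΨ m).2.1, fun m => (hΨ m).2.2, hF, hG, ?_⟩
  rintro A' B' Ψ' ⟨hf', hg', -⟩
  obtain ⟨rfl, rfl⟩ := eq_of_factorial_mul_eq_mul_pow hF.isRegular.left (fun m => (hΨ m).1) hf'
  obtain ⟨rfl, -⟩ := eq_of_factorial_mul_eq_mul_pow hG.isRegular.left (fun m => (hΨ m).2.1) hg'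
  exact ⟨rfl, rfl, rfl⟩
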